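/- Let Θ and X be finite nonempty sets, u : X × Θ → ℝ, and x : Θ → Δ(X) a social choice function. Then x is cyclically monotone if and only if x is one-shot implementable with transfers, i.e., there exists T : Θ → ℝ such that for all θ, θ' ∈ Θ, ū(x(θ),θ) − T(θ) ≥ ū(x(θ'),θ) − T(θ'). -/

import Mathlib

/-!
Write `w θ θ' = ū(x θ', θ) - ū(x θ, θ)` for the gain of type `θ` from reporting `θ'`. Transfers
implement `x` exactly when `T` is a potential for `w`, i.e. `w θ θ' ≤ T θ' - T θ`, and cyclic
monotonicity says that `w` has nonpositive weight around every simple cycle.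

Given a potential, the weight of a cycle is at most a telescoping sum, which vanishes. Conversely,
let `T b` be the largest weight of a simple path ending at `b`; there are only finitely many such
paths. Extending a path ending at `a` by the edge `a → b` either gives a simple path to `b`, or
closes a simple cycle through `b`, and cutting that cycle off leaves a simple path to `b` that is
no lighter. Hence `T a + w a b ≤ T b`.
-/

open Finset

/-- Lifted utility: `ū(μ,θ) = Σ_a μ(a)·u(a,θ)` for a lottery `μ ∈ Δ(X)`. -/
noncomputable def ubar {Θ X : Type*} [Fintype X]
    (u : X × Θ → ℝ) (μ : X → ℝ) (θ : Θ) : ℝ :=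
  ∑ a, μ a * u (a, θ)

/-- `x : Θ → Δ(X)` is cyclically monotone for the utility `u`. -/
def CyclMonoSCF {Θ X : Type*} [Fintype X] (u : X × Θ → ℝ) (x : Θ → X → ℝ) : Prop :=
  ∀ J : ℕ, ∀ θs : Fin (J + 2) → Θ, Function.Injective θs →
    ∑ j, ubar u (x (θs (j + 1))) (θs j) ≤ ∑ j, ubar u (x (θs j)) (θs j)

section PathWeight

variable {Θ : Type*} (w : Θ → Θ → ℝ)

noncomputable def pathWeight : List Θ → ℝ
  | a :: b :: t => w a b + pathWeight (b :: t)
  | _ => 0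

@[simp] lemma pathWeight_singleton (a : Θ) : pathWeight w [a] = 0 := rfl

@[simp] lemma pathWeight_cons_cons (a b : Θ) (t : List Θ) :
    pathWeight w (a :: b :: t) = w a b + pathWeight w (b :: t) := rfl

lemma pathWeight_append_cons (l₁ : List Θ) (b : Θ) (l₂ : List Θ) :
    pathWeight w (l₁ ++ b :: l₂) = pathWeight w (l₁ ++ [b]) + pathWeight w (b :: l₂) := by
  induction l₁ with
  | nil => simp
  | cons a l₁ ih =>
    cases l₁ with
    | nil => simp
    | cons c l₁ =>
      simp only [List.cons_append, pathWeight_cons_cons] at ih ⊢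
      rw [ih, add_assoc]

lemma pathWeight_append_singleton (l : List Θ) (a b : Θ) :
    pathWeight w (l ++ [a, b]) = pathWeight w (l ++ [a]) + w a b := by
  simp [pathWeight_append_cons w l a [b]]

lemma pathWeight_ofFn_append_singleton {n : ℕ} (v : Fin (n + 1) → Θ) (b : Θ) :
    pathWeight w (List.ofFn v ++ [b]) =
      ∑ i : Fin n, w (v i.castSucc) (v i.succ) + w (v (Fin.last n)) b := by
  induction n with
  | zero => simp
  | succ n ih =>
    have htail : List.ofFn (fun i : Fin (n + 1) => v i.succ) =
        v (Fin.succ 0) :: List.ofFn fun i : Fin n => v i.succ.succ :=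
      List.ofFn_succ
    rw [List.ofFn_succ, List.cons_append, htail, List.cons_append, pathWeight_cons_cons,
      ← List.cons_append, ← htail, ih, Fin.sum_univ_succ]
    simp only [Fin.succ_last, Fin.succ_castSucc, Fin.castSucc_zero]
    ring

lemma pathWeight_ofFn_cycle {n : ℕ} (v : Fin (n + 1) → Θ) :
    pathWeight w (List.ofFn v ++ [v 0]) = ∑ j, w (v j) (v (j + 1)) := by
  rw [pathWeight_ofFn_append_singleton, Fin.sum_univ_castSucc, Fin.last_add_one]
  simp only [Fin.coeSucc_eq_succ]

end PathWeight

section Potential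

variable {Θ : Type*} {w : Θ → Θ → ℝ}

theorem cyclicSum_nonpos_of_potential {n : ℕ} [NeZero n] {T : Θ → ℝ}
    (hT : ∀ a b, w a b ≤ T b - T a) (v : Fin n → Θ) : ∑ j, w (v j) (v (j + 1)) ≤ 0 :=
  calc ∑ j, w (v j) (v (j + 1))
      ≤ ∑ j, (T (v (j + 1)) - T (v j)) := sum_le_sum fun j _ => hT _ _
    _ = 0 := by
      rw [sum_sub_distrib, sub_eq_zero]
      exact Fintype.sum_equiv (Equiv.addRight 1) _ _ fun _ => rfl

lemma pathWeight_simpleCycle_nonpos (hloop : ∀ a, w a a ≤ 0)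
    (hcyc : ∀ (k : ℕ) (v : Fin (k + 2) → Θ), Function.Injective v →
      ∑ j, w (v j) (v (j + 1)) ≤ 0)
    {c : Θ} {l : List Θ} (hl : (c :: l).Nodup) : pathWeight w (c :: l ++ [c]) ≤ 0 := by
  cases l with
  | nil => simpa using hloop c
  | cons d t =>
    have hinj : Function.Injective (c :: d :: t).get := List.nodup_iff_injective_get.mp hl
    have := hcyc t.length _ hinj
    rwa [← pathWeight_ofFn_cycle, List.ofFn_get] at this

lemma exists_simplePath_ge_extend
    (hcyc : ∀ (c : Θ) (l : List Θ), (c :: l).Nodup → pathWeight w (c :: l ++ [c]) ≤ 0)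
    {l : List Θ} {a : Θ} (hl : (l ++ [a]).Nodup) (b : Θ) :
    ∃ l' : List Θ, (l' ++ [b]).Nodup ∧
      pathWeight w (l ++ [a]) + w a b ≤ pathWeight w (l' ++ [b]) := by
  rw [← pathWeight_append_singleton]
  by_cases hb : b ∈ l ++ [a]
  · obtain ⟨p, s, hps⟩ := List.append_of_mem hb
    rw [hps] at hl
    refine ⟨p, hl.sublist (by simp), ?_⟩
    have hcycle := hcyc b s (hl.sublist (List.suffix_append p _).sublist)
    rw [show l ++ [a, b] = p ++ b :: (s ++ [b]) by simpa using congrArg (· ++ [b]) hps,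
      pathWeight_append_cons, ← List.cons_append]
    linarith
  · exact ⟨l ++ [a], by simpa using hl.concat hb, by simp⟩

noncomputable def simplePathSup (w : Θ → Θ → ℝ) (b : Θ) : ℝ :=
  ⨆ l : {l : List Θ // (l ++ [b]).Nodup}, pathWeight w (l.1 ++ [b])

lemma pathWeight_le_simplePathSup [Finite Θ] {l : List Θ} {b : Θ} (hl : (l ++ [b]).Nodup) :
    pathWeight w (l ++ [b]) ≤ simplePathSup w b := by
  have := Fintype.ofFinite Θ
  have : Finite {l : List Θ // (l ++ [b]).Nodup} :=
    Finite.of_injective (β := {l : List Θ // l.Nodup}) (fun l => ⟨l.1, l.2.sublist (by simp)⟩)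
      fun l l' h => Subtype.ext (congrArg Subtype.val h :)
  exact le_ciSup (f := fun l : {l // (l ++ [b]).Nodup} => pathWeight w (l.1 ++ [b]))
    (Finite.bddAbove_range _) ⟨l, hl⟩

theorem exists_potential_of_simpleCycle_nonpos [Finite Θ]
    (hcyc : ∀ (c : Θ) (l : List Θ), (c :: l).Nodup → pathWeight w (c :: l ++ [c]) ≤ 0) :
    ∃ T : Θ → ℝ, ∀ a b, w a b ≤ T b - T a := by
  refine ⟨simplePathSup w, fun a b => le_sub_comm.mp ?_⟩
  have : Nonempty {l : List Θ // (l ++ [a]).Nodup} := ⟨⟨[], by simp⟩⟩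
  refine ciSup_le fun l => le_sub_iff_add_le.mpr ?_
  obtain ⟨l', hl', hle⟩ := exists_simplePath_ge_extend hcyc l.2 b
  exact hle.trans (pathWeight_le_simplePathSup hl')

theorem exists_potential_of_cyclicSum_nonpos [Finite Θ] (hloop : ∀ a, w a a ≤ 0)
    (hcyc : ∀ (k : ℕ) (v : Fin (k + 2) → Θ), Function.Injective v →
      ∑ j, w (v j) (v (j + 1)) ≤ 0) :
    ∃ T : Θ → ℝ, ∀ a b, w a b ≤ T b - T a :=
  exists_potential_of_simpleCycle_nonpos fun _ _ hl => pathWeight_simpleCycle_nonpos hloop hcyc hl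

end Potential

noncomputable def misreportGain {Θ X : Type*} [Fintype X] (u : X × Θ → ℝ) (x : Θ → X → ℝ)
    (θ θ' : Θ) : ℝ :=
  ubar u (x θ') θ - ubar u (x θ) θ

lemma cyclMonoSCF_iff_cyclicSum_misreportGain_nonpos {Θ X : Type*} [Fintype X]
    {u : X × Θ → ℝ} {x : Θ → X → ℝ} :
    CyclMonoSCF u x ↔ ∀ (J : ℕ) (θs : Fin (J + 2) → Θ), Function.Injective θs →
      ∑ j, misreportGain u x (θs j) (θs (j + 1)) ≤ 0 := by
  simp only [CyclMonoSCF, misreportGain, sum_sub_distrib, sub_nonpos]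

lemma misreportGain_le_sub_iff {Θ X : Type*} [Fintype X] {u : X × Θ → ℝ} {x : Θ → X → ℝ}
    {T : Θ → ℝ} {θ θ' : Θ} :
    misreportGain u x θ θ' ≤ T θ' - T θ ↔ ubar u (x θ') θ - T θ' ≤ ubar u (x θ) θ - T θ := by
  rw [misreportGain]
  constructor <;> intro <;> linarith

theorem cyclMono_iff_implementable_with_transfers_general {Θ X : Type*}
    [Fintype Θ] [Fintype X]
    (u : X × Θ → ℝ) (x : Θ → X → ℝ) :
    CyclMonoSCF u x ↔
      ∃ T : Θ → ℝ, ∀ θ θ' : Θ,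
        ubar u (x θ') θ - T θ' ≤ ubar u (x θ) θ - T θ := by
  simp only [cyclMonoSCF_iff_cyclicSum_misreportGain_nonpos, ← misreportGain_le_sub_iff]
  exact ⟨exists_potential_of_cyclicSum_nonpos fun _ => (sub_self _).le,
    fun ⟨_, hT⟩ _ θs _ => cyclicSum_nonpos_of_potential hT θs⟩

/-- Rochet. A social choice function is cyclically monotone
iff it is one-shot implementable with transfers. -/
theorem cyclMono_iff_implementable_with_transfers {Θ X : Type*}
    [Fintype Θ] [Fintype X] [Nonempty Θ] [Nonempty X]
    (u : X × Θ → ℝ) (x : Θ → X → ℝ) :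
    CyclMonoSCF u x ↔
      ∃ T : Θ → ℝ, ∀ θ θ' : Θ,
        ubar u (x θ') θ - T θ' ≤ ubar u (x θ) θ - T θ :=
  cyclMono_iff_implementable_with_transfers_general u x
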